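/- arXiv:2302.04694 — 3 statements merged into one kernel-verified Lean document; each statement's English description precedes it below -/
import Mathlib

section
/- Let S be a finite nonempty set and c a cost function. If there exists R ⊆ S such that c_{pq} ≥ 0 for all {p,q} ∈ δ(R) and c_{pqr} ≥ 0 for all {p,q,r} ∈ T_{δ(R)}, then there exists an optimal solution x* of min_{x∈X_S} φ_c(x) such that x*_{ij} = 0 for all {i,j} ∈ δ(R). -/
open Finset

/-- `binom(S,2)`: the set of 2-element subsets (unordered pairs) of the ground set. -/
def pairs (V : Type*) [Fintype V] [DecidableEq V] : Finset (Finset V) :=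
  (univ : Finset V).powersetCard 2

/-- `binom(S,3)`: the set of 3-element subsets (unordered triples) of the ground set. -/
def triples (V : Type*) [Fintype V] [DecidableEq V] : Finset (Finset V) :=
  (univ : Finset V).powersetCard 3

/-- The feasible set `X_S`: maps `x : binom(S,2) → {0,1}` satisfying the triangle
inequalities `x_{pq} + x_{qr} - x_{pr} ≤ 1` for all pairwise distinct `p, q, r`. -/
def feasible {V : Type*} [Fintype V] [DecidableEq V] (x : Finset V → ℝ) : Prop :=
  (∀ e ∈ pairs V, x e = 0 ∨ x e = 1) ∧
    ∀ p q r : V, p ≠ q → q ≠ r → p ≠ r →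
      x {p, q} + x {q, r} - x {p, r} ≤ 1

/-- The cubic objective
`φ_c(x) = Σ_{{p,q,r}} c_{pqr} x_{pq} x_{pr} x_{qr} + Σ_{{p,q}} c_{pq} x_{pq} + c_∅`. -/
def obj {V : Type*} [Fintype V] [DecidableEq V] (c x : Finset V → ℝ) : ℝ :=
  ∑ t ∈ triples V, c t * ∏ e ∈ t.powersetCard 2, x e
    + ∑ e ∈ pairs V, c e * x e + c ∅

/-- `δ(R)`: the pairs having exactly one element in `R`. -/
def cut {V : Type*} [Fintype V] [DecidableEq V] (R : Finset V) : Finset (Finset V) :=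
  (pairs V).filter fun e => (e ∩ R).card = 1

/-- `T_{P'}`: the triples having some 2-element subset in `P'`. -/
def Tof {V : Type*} [Fintype V] [DecidableEq V] (P' : Finset (Finset V)) :
    Finset (Finset V) :=
  (triples V).filter fun t => ∃ e ∈ t.powersetCard 2, e ∈ P'

section Aux
variable {V : Type*} [Fintype V] [DecidableEq V]

lemma mem_pairs_pair {a b : V} (h : a ≠ b) : ({a,b} : Finset V) ∈ pairs V := by
  simp [pairs, Finset.mem_powersetCard, Finset.card_pair h]

lemma cut_pair_iff (R : Finset V) {a b : V} (h : a ≠ b) :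
    ({a,b} : Finset V) ∈ cut R ↔ ¬((a ∈ R) ↔ (b ∈ R)) := by
  rw [cut, mem_filter]
  simp only [mem_pairs_pair h, true_and]
  by_cases ha : a ∈ R <;> by_cases hb : b ∈ R <;>
    simp [Finset.insert_inter_of_mem, Finset.insert_inter_of_notMem,
      Finset.singleton_inter_of_mem, Finset.singleton_inter_of_notMem,
      ha, hb, Finset.card_pair h]

lemma sub_mem_pairs {t e : Finset V} (ht : t ∈ triples V) (he : e ∈ t.powersetCard 2) :
    e ∈ pairs V := by
  rw [Finset.mem_powersetCard] at he
  simp [pairs, Finset.mem_powersetCard, he.2]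

lemma nonneg_of_feasible {x : Finset V → ℝ} (hx : feasible x) {e : Finset V}
    (he : e ∈ pairs V) : 0 ≤ x e := by
  rcases hx.1 e he with h | h <;> simp [h]

/-- Zeroing out the cut edges preserves feasibility. -/
lemma feasible_zeroed (R : Finset V) {x : Finset V → ℝ} (hx : feasible x) :
    feasible (fun e => if e ∈ cut R then 0 else x e) := by
  constructor
  · intro e he
    by_cases h : e ∈ cut R <;> simp [h, hx.1 e he]
  · intro p q r hpq hqr hpr
    by_cases hcut : ({p, r} : Finset V) ∈ cut R
    · -- exactly one of {p,q}, {q,r} is in the cut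
      rw [cut_pair_iff R hpr] at hcut
      have hx01 : ∀ a b : V, a ≠ b →
          (if ({a,b} : Finset V) ∈ cut R then (0:ℝ) else x {a,b}) ≤ 1 := by
        intro a b hab
        by_cases h : ({a,b} : Finset V) ∈ cut R
        · simp [h]
        · simp only [h, if_neg, if_false]
          rcases hx.1 _ (mem_pairs_pair hab) with h' | h' <;> simp [h']
      by_cases hq : (p ∈ R) ↔ (q ∈ R)
      · have h1 : ({q, r} : Finset V) ∈ cut R := by
          rw [cut_pair_iff R hqr]; tauto
        simp only [h1, if_pos]
        have := hx01 p q hpq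
        by_cases h2 : ({p,r} : Finset V) ∈ cut R <;> by_cases h3 : ({p,q}:Finset V) ∈ cut R <;>
          simp_all <;> nlinarith [nonneg_of_feasible hx (mem_pairs_pair hpr),
            nonneg_of_feasible hx (mem_pairs_pair hpq)]
      · have h1 : ({p, q} : Finset V) ∈ cut R := by
          rw [cut_pair_iff R hpq]; tauto
        simp only [h1, if_pos]
        have := hx01 q r hqr
        by_cases h2 : ({p,r} : Finset V) ∈ cut R <;> by_cases h3 : ({q,r}:Finset V) ∈ cut R <;>
          simp_all <;> nlinarith [nonneg_of_feasible hx (mem_pairs_pair hpr),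
            nonneg_of_feasible hx (mem_pairs_pair hqr)]
    · simp only [hcut, if_neg, if_false]
      have h1 : (if ({p,q} : Finset V) ∈ cut R then (0:ℝ) else x {p,q}) ≤ x {p,q} := by
        by_cases h : ({p,q} : Finset V) ∈ cut R <;>
          simp [h, nonneg_of_feasible hx (mem_pairs_pair hpq)]
      have h2 : (if ({q,r} : Finset V) ∈ cut R then (0:ℝ) else x {q,r}) ≤ x {q,r} := by
        by_cases h : ({q,r} : Finset V) ∈ cut R <;>
          simp [h, nonneg_of_feasible hx (mem_pairs_pair hqr)]
      have := hx.2 p q r hpq hqr hpr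
      linarith

/-- Zeroing out the cut edges does not increase the objective. -/
lemma obj_zeroed_le (R : Finset V) (c : Finset V → ℝ)
    (hpair : ∀ e ∈ cut R, 0 ≤ c e)
    (htriple : ∀ t ∈ Tof (cut R), 0 ≤ c t)
    {x : Finset V → ℝ} (hx : feasible x) :
    obj c (fun e => if e ∈ cut R then 0 else x e) ≤ obj c x := by
  unfold obj
  have h1 : ∑ t ∈ triples V, c t * ∏ e ∈ t.powersetCard 2, (if e ∈ cut R then (0:ℝ) else x e)
      ≤ ∑ t ∈ triples V, c t * ∏ e ∈ t.powersetCard 2, x e := by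
    apply Finset.sum_le_sum
    intro t ht
    by_cases hT : ∃ e ∈ t.powersetCard 2, e ∈ cut R
    · obtain ⟨e, he, hec⟩ := hT
      have hprod0 : (∏ e ∈ t.powersetCard 2, if e ∈ cut R then (0:ℝ) else x e) = 0 :=
        Finset.prod_eq_zero he (by simp [hec])
      rw [hprod0, mul_zero]
      have hct : 0 ≤ c t := htriple t (by
        rw [Tof, mem_filter]; exact ⟨ht, e, he, hec⟩)
      have hprodx : 0 ≤ ∏ e ∈ t.powersetCard 2, x e :=
        Finset.prod_nonneg fun e he => nonneg_of_feasible hx (sub_mem_pairs ht he)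
      positivity
    · push_neg at hT
      apply le_of_eq
      congr 1
      exact Finset.prod_congr rfl fun e he => by simp [hT e he]
  have h2 : ∑ e ∈ pairs V, c e * (if e ∈ cut R then (0:ℝ) else x e)
      ≤ ∑ e ∈ pairs V, c e * x e := by
    apply Finset.sum_le_sum
    intro e he
    by_cases h : e ∈ cut R
    · simp only [h, if_pos, mul_zero]
      exact mul_nonneg (hpair e h) (nonneg_of_feasible hx he)
    · simp [h]
  linarith

end Aux

/--
Let `S` be a finite nonempty set and `c` a cost function.  If there exists
`R ⊆ S` such that `c_{pq} ≥ 0` for all `{p,q} ∈ δ(R)` and `c_{pqr} ≥ 0` for all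
`{p,q,r} ∈ T_{δ(R)}`, then there exists an optimal solution `x*` of `min_{x ∈ X_S} φ_c(x)`
such that `x*_{ij} = 0` for all `{i,j} ∈ δ(R)`.
-/
theorem subset_separation_persistency {V : Type*} [Fintype V] [DecidableEq V] [Nonempty V]
    (c : Finset V → ℝ) (R : Finset V)
    (hpair : ∀ e ∈ cut R, 0 ≤ c e)
    (htriple : ∀ t ∈ Tof (cut R), 0 ≤ c t) :
    ∃ xstar : Finset V → ℝ, feasible xstar ∧
      (∀ x : Finset V → ℝ, feasible x → obj c xstar ≤ obj c x) ∧
      ∀ e ∈ cut R, xstar e = 0 := by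
  classical
  -- indicator functions of edge sets
  set F : Finset (Finset V) → (Finset V → ℝ) := fun E e => if e ∈ E then 1 else 0 with hF
  set A : Finset (Finset (Finset V)) :=
    (pairs V).powerset.filter (fun E => feasible (F E)) with hA
  have hne : A.Nonempty := by
    refine ⟨∅, ?_⟩
    simp only [hA, mem_filter, Finset.mem_powerset]
    refine ⟨Finset.empty_subset _, ?_, ?_⟩
    · intro e _; simp [hF]
    · intro p q r _ _ _; simp [hF]
  obtain ⟨E0, hE0A, hE0min⟩ := A.exists_min_image (fun E => obj c (F E)) hne
  rw [hA, mem_filter] at hE0A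
  have hfeas0 : feasible (F E0) := hE0A.2
  refine ⟨fun e => if e ∈ cut R then 0 else F E0 e, feasible_zeroed R hfeas0, ?_, ?_⟩
  · intro x hx
    -- canonical edge set of x
    set Ex : Finset (Finset V) := (pairs V).filter (fun e => x e = 1) with hEx
    have hagree : ∀ e ∈ pairs V, F Ex e = x e := by
      intro e he
      rcases hx.1 e he with h | h <;> simp [hF, hEx, he, h]
    have hfeasx : feasible (F Ex) := by
      constructor
      · intro e _; by_cases h : e ∈ Ex <;> simp [hF, h]
      · intro p q r hpq hqr hpr
        rw [hagree _ (mem_pairs_pair hpq), hagree _ (mem_pairs_pair hqr),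
          hagree _ (mem_pairs_pair hpr)]
        exact hx.2 p q r hpq hqr hpr
    have hobjx : obj c (F Ex) = obj c x := by
      unfold obj
      congr 1
      · congr 1
        · exact Finset.sum_congr rfl fun t ht => by
            congr 1
            exact Finset.prod_congr rfl fun e he => hagree e (sub_mem_pairs ht he)
        · exact Finset.sum_congr rfl fun e he => by rw [hagree e he]
    have hmem : Ex ∈ A := by
      rw [hA, mem_filter, Finset.mem_powerset]
      exact ⟨Finset.filter_subset _ _, hfeasx⟩
    calc obj c (fun e => if e ∈ cut R then 0 else F E0 e)
        ≤ obj c (F E0) := obj_zeroed_le R c hpair htriple hfeas0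
      _ ≤ obj c (F Ex) := hE0min Ex hmem
      _ = obj c x := hobjx
  · intro e he; simp [he]
end

section
/- Let S be a finite nonempty set, c a cost function, and {i,j} ∈ binom(S,2). If there exists R ⊆ S with {i,j} ∈ δ(R) such that 2·c_{ij}^− + Σ_{{p,q,r}∈T_{{ {i,j} }}} c_{pqr}^− ≥ Σ_{{p,q,r}∈T_{δ(R)}} |c_{pqr}| + Σ_{{p,q}∈δ(R)} |c_{pq}|, then there exists an optimal solution x* of min_{x∈X_S} φ_c(x) such that x*_{ij} = 1. -/
open Finset

set_option linter.unusedSectionVars false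

section Aux
variable {V : Type*} [Fintype V] [DecidableEq V]

lemma mem_pairs_iff {e : Finset V} : e ∈ pairs V ↔ e.card = 2 := by
  simp [pairs, Finset.mem_powersetCard]

lemma pair_mem_pairs {p q : V} (h : p ≠ q) : ({p, q} : Finset V) ∈ pairs V := by
  rw [mem_pairs_iff]; exact Finset.card_pair h

lemma cut_mem_iff {p q : V} (hpq : p ≠ q) (R : Finset V) :
    (({p, q} : Finset V) ∩ R).card = 1 ↔ ¬((p ∈ R) ↔ (q ∈ R)) := by
  by_cases hp : p ∈ R <;> by_cases hq : q ∈ R <;>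
    simp [Finset.insert_inter_of_mem, Finset.insert_inter_of_notMem,
      Finset.singleton_inter_of_mem, Finset.singleton_inter_of_notMem, hp, hq,
      Finset.card_insert_of_notMem, hpq]

lemma feas_01 {x : Finset V → ℝ} (hx : feasible x) {p q : V} (h : p ≠ q) :
    x {p, q} = 0 ∨ x {p, q} = 1 :=
  hx.1 _ (pair_mem_pairs h)

lemma feas_trans {x : Finset V → ℝ} (hx : feasible x) {p q r : V}
    (hpq : p ≠ q) (hqr : q ≠ r) (hpr : p ≠ r)
    (h1 : x {p, q} = 1) (h2 : x {q, r} = 1) : x {p, r} = 1 := by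
  have ht := hx.2 p q r hpq hqr hpr
  rcases feas_01 hx hpr with h3 | h3
  · rw [h1, h2, h3] at ht; linarith
  · exact h3

lemma x_comm (x : Finset V → ℝ) (p q : V) : x {p, q} = x {q, p} := by
  rw [Finset.pair_comm]

/-- The union of the blocks of `i` and `j` after cutting along `R`. -/
def Bset (x : Finset V → ℝ) (R : Finset V) (i j : V) (p : V) : Prop :=
  (p = i ∨ (x {i, p} = 1 ∧ ((p ∈ R) ↔ (i ∈ R)))) ∨
  (p = j ∨ (x {j, p} = 1 ∧ ((p ∈ R) ↔ (j ∈ R))))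

def rel (x : Finset V → ℝ) (R : Finset V) (i j : V) (p q : V) : Prop :=
  (Bset x R i j p ∧ Bset x R i j q) ∨ (x {p, q} = 1 ∧ ((p ∈ R) ↔ (q ∈ R)))

lemma rel_symm {x : Finset V → ℝ} {R : Finset V} {i j p q : V}
    (h : rel x R i j p q) : rel x R i j q p := by
  rcases h with ⟨hp, hq⟩ | ⟨h1, h2⟩
  · exact Or.inl ⟨hq, hp⟩
  · exact Or.inr ⟨by rwa [x_comm x q p], h2.symm⟩

lemma Bset_side {x : Finset V → ℝ} {R : Finset V} {i j p : V}
    (h : Bset x R i j p) : ((p ∈ R) ↔ (i ∈ R)) ∨ ((p ∈ R) ↔ (j ∈ R)) := by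
  rcases h with (rfl | ⟨_, hs⟩) | (rfl | ⟨_, hs⟩)
  · exact Or.inl Iff.rfl
  · exact Or.inl hs
  · exact Or.inr Iff.rfl
  · exact Or.inr hs

lemma Bset_join {x : Finset V → ℝ} (hx : feasible x) {R : Finset V} {i j p q : V}
    (hB : Bset x R i j p) (hpq : p ≠ q) (h1 : x {p, q} = 1)
    (hs : (p ∈ R) ↔ (q ∈ R)) : Bset x R i j q := by
  rcases hB with hi | hj
  · by_cases hqi : q = i
    · exact Or.inl (Or.inl hqi)
    rcases hi with rfl | ⟨hxip, hsip⟩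
    · exact Or.inl (Or.inr ⟨h1, hs.symm⟩)
    · by_cases hpi : p = i
      · subst hpi; exact Or.inl (Or.inr ⟨h1, hs.symm⟩)
      · have : x {i, q} = 1 :=
          feas_trans hx (fun h => hpi h.symm) hpq (fun h => hqi h.symm) hxip h1
        exact Or.inl (Or.inr ⟨this, (hs.symm.trans hsip)⟩)
  · by_cases hqj : q = j
    · exact Or.inr (Or.inl hqj)
    rcases hj with rfl | ⟨hxjp, hsjp⟩
    · exact Or.inr (Or.inr ⟨h1, hs.symm⟩)
    · by_cases hpj : p = j
      · subst hpj; exact Or.inr (Or.inr ⟨h1, hs.symm⟩)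
      · have : x {j, q} = 1 :=
          feas_trans hx (fun h => hpj h.symm) hpq (fun h => hqj h.symm) hxjp h1
        exact Or.inr (Or.inr ⟨this, (hs.symm.trans hsjp)⟩)

lemma rel_trans {x : Finset V → ℝ} (hx : feasible x) {R : Finset V} {i j p q r : V}
    (hpq : p ≠ q) (hqr : q ≠ r) (hpr : p ≠ r)
    (h1 : rel x R i j p q) (h2 : rel x R i j q r) : rel x R i j p r := by
  rcases h1 with ⟨hBp, hBq⟩ | ⟨hx1, hs1⟩
  · rcases h2 with ⟨_, hBr⟩ | ⟨hx2, hs2⟩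
    · exact Or.inl ⟨hBp, hBr⟩
    · exact Or.inl ⟨hBp, Bset_join hx hBq hqr hx2 hs2⟩
  · rcases h2 with ⟨hBq, hBr⟩ | ⟨hx2, hs2⟩
    · exact Or.inl ⟨Bset_join hx hBq (Ne.symm hpq) (by rwa [x_comm x q p]) hs1.symm, hBr⟩
    · exact Or.inr ⟨feas_trans hx hpq hqr hpr hx1 hx2, hs1.trans hs2⟩

open Classical in
/-- Cut `x` along `δ(R)` and join the blocks of `i` and `j`. -/
noncomputable def join (x : Finset V → ℝ) (R : Finset V) (i j : V) : Finset V → ℝ :=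
  fun e => if ∃ p ∈ e, ∃ q ∈ e, p ≠ q ∧ rel x R i j p q then 1 else 0

lemma join_01 (x : Finset V → ℝ) (R : Finset V) (i j : V) (e : Finset V) :
    join x R i j e = 0 ∨ join x R i j e = 1 := by
  unfold join; split <;> simp

lemma join_pair_iff {x : Finset V → ℝ} {R : Finset V} {i j p q : V} (hpq : p ≠ q) :
    join x R i j {p, q} = 1 ↔ rel x R i j p q := by
  constructor
  · intro h
    unfold join at h
    split at h
    · rename_i hex
      obtain ⟨a, ha, b, hb, hab, hr⟩ := hex
      simp only [Finset.mem_insert, Finset.mem_singleton] at ha hb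
      rcases ha with rfl | rfl <;> rcases hb with rfl | rfl
      · exact absurd rfl hab
      · exact hr
      · exact rel_symm hr
      · exact absurd rfl hab
    · norm_num at h
  · intro hr
    unfold join
    rw [if_pos ⟨p, by simp, q, by simp, hpq, hr⟩]

lemma join_ij (x : Finset V → ℝ) (R : Finset V) {i j : V} (hij : i ≠ j) :
    join x R i j {i, j} = 1 :=
  (join_pair_iff hij).mpr (Or.inl ⟨Or.inl (Or.inl rfl), Or.inr (Or.inl rfl)⟩)

lemma join_feasible {x : Finset V → ℝ} (hx : feasible x) (R : Finset V) (i j : V) :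
    feasible (join x R i j) := by
  refine ⟨fun e _ => join_01 x R i j e, ?_⟩
  intro p q r hpq hqr hpr
  rcases join_01 x R i j {p, q} with h1 | h1 <;>
    rcases join_01 x R i j {q, r} with h2 | h2 <;>
      rcases join_01 x R i j {p, r} with h3 | h3 <;> try linarith
  have hr := rel_trans hx hpq hqr hpr ((join_pair_iff hpq).mp h1) ((join_pair_iff hqr).mp h2)
  have := (join_pair_iff hpr).mpr hr
  linarith

lemma Bset_same_component {x : Finset V → ℝ} (hx : feasible x) {R : Finset V} {i j p q : V}
    (hside : ¬((i ∈ R) ↔ (j ∈ R))) (hBp : Bset x R i j p) (hBq : Bset x R i j q)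
    (hpq : p ≠ q) (hs : (p ∈ R) ↔ (q ∈ R)) : x {p, q} = 1 := by
  have key : ∀ k a b : V, a ≠ b →
      (a = k ∨ (x {k, a} = 1 ∧ ((a ∈ R) ↔ (k ∈ R)))) →
      (b = k ∨ (x {k, b} = 1 ∧ ((b ∈ R) ↔ (k ∈ R)))) → x {a, b} = 1 := by
    intro k a b hab ha hb
    by_cases hak : a = k
    · subst hak
      rcases hb with rfl | ⟨hxb, _⟩
      · exact absurd rfl hab
      · exact hxb
    · by_cases hbk : b = k
      · subst hbk
        rcases ha with rfl | ⟨hxa, _⟩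
        · exact absurd rfl hab
        · rwa [x_comm x a b]
      · rcases ha with rfl | ⟨hxa, hsa⟩
        · exact absurd rfl hak
        rcases hb with rfl | ⟨hxb, hsb⟩
        · exact absurd rfl hbk
        exact feas_trans hx (fun h => hak h) (fun h => hbk h.symm) hab
          (by rwa [x_comm x a k]) hxb
  rcases hBp with hpi | hpj <;> rcases hBq with hqi | hqj
  · exact key i p q hpq hpi hqi
  · exfalso
    have hsp : (p ∈ R) ↔ (i ∈ R) := by
      rcases hpi with rfl | ⟨_, hh⟩
      · exact Iff.rfl
      · exact hh
    have hsq : (q ∈ R) ↔ (j ∈ R) := by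
      rcases hqj with rfl | ⟨_, hh⟩
      · exact Iff.rfl
      · exact hh
    exact hside ((hsp.symm.trans hs).trans hsq)
  · exfalso
    have hsp : (p ∈ R) ↔ (j ∈ R) := by
      rcases hpj with rfl | ⟨_, hh⟩
      · exact Iff.rfl
      · exact hh
    have hsq : (q ∈ R) ↔ (i ∈ R) := by
      rcases hqi with rfl | ⟨_, hh⟩
      · exact Iff.rfl
      · exact hh
    exact hside ((hsq.symm.trans hs.symm).trans hsp)
  · exact key j p q hpq hpj hqj

lemma join_same_side {x : Finset V → ℝ} (hx : feasible x) {R : Finset V} {i j : V}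
    (hside : ¬((i ∈ R) ↔ (j ∈ R))) {p q : V} (hpq : p ≠ q)
    (hs : (p ∈ R) ↔ (q ∈ R)) : join x R i j {p, q} = x {p, q} := by
  rcases feas_01 hx hpq with h0 | h1
  · rw [h0]
    rcases join_01 x R i j {p, q} with hj | hj
    · exact hj
    · exfalso
      rcases (join_pair_iff hpq).mp hj with ⟨hBp, hBq⟩ | ⟨hx1, _⟩
      · have := Bset_same_component hx hside hBp hBq hpq hs
        rw [h0] at this; norm_num at this
      · rw [h0] at hx1; norm_num at hx1
  · rw [h1]
    exact (join_pair_iff hpq).mpr (Or.inr ⟨h1, hs⟩)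

lemma join_eq_of_not_cut {x : Finset V → ℝ} (hx : feasible x) {R : Finset V} {i j : V}
    (hside : ¬((i ∈ R) ↔ (j ∈ R))) {e : Finset V} (he : e.card = 2)
    (hnc : (e ∩ R).card ≠ 1) : join x R i j e = x e := by
  obtain ⟨p, q, hpq, rfl⟩ := Finset.card_eq_two.mp he
  have hs : (p ∈ R) ↔ (q ∈ R) := by
    by_contra hc
    exact hnc ((cut_mem_iff hpq R).mpr hc)
  exact join_same_side hx hside hpq hs

lemma prod01 {α : Type*} (s : Finset α) (f : α → ℝ) (h : ∀ e ∈ s, f e = 0 ∨ f e = 1) :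
    (∏ e ∈ s, f e) = 0 ∨ (∏ e ∈ s, f e) = 1 := by
  classical
  induction s using Finset.induction_on with
  | empty => right; simp
  | @insert a s ha ih =>
    rw [Finset.prod_insert ha]
    rcases h a (Finset.mem_insert_self a s) with h0 | h0 <;>
      rcases ih (fun e he => h e (Finset.mem_insert_of_mem he)) with p0 | p0 <;>
        simp [h0, p0]

lemma max_neg_le_abs (a : ℝ) : max (-a) 0 ≤ |a| :=
  max_le (neg_le_abs a) (abs_nonneg a)

lemma abs_sub_self_eq (a : ℝ) : |a| - a = 2 * max (-a) 0 := by
  rcases le_total a 0 with hc | hc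
  · rw [abs_of_nonpos hc, max_eq_left (by linarith)]; ring
  · rw [abs_of_nonneg hc, max_eq_right (by linarith)]; ring

/-- The key improvement step: any feasible solution can be turned into a feasible
solution with `x {i,j} = 1` without increasing the objective. -/
lemma improve (c : Finset V → ℝ) (i j : V) (hij : i ≠ j) (R : Finset V)
    (hR : ({i, j} : Finset V) ∈ cut R)
    (h : 2 * max (-(c {i, j})) 0 + ∑ t ∈ Tof {({i, j} : Finset V)}, max (-(c t)) 0 ≥
        ∑ t ∈ Tof (cut R), |c t| + ∑ e ∈ cut R, |c e|)
    (x : Finset V → ℝ) (hx : feasible x) :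
    ∃ y : Finset V → ℝ, feasible y ∧ y {i, j} = 1 ∧ obj c y ≤ obj c x := by
  rcases feas_01 hx hij with h0 | h1
  swap
  · exact ⟨x, hx, h1, le_rfl⟩
  have hside : ¬((i ∈ R) ↔ (j ∈ R)) :=
    (cut_mem_iff hij R).mp (Finset.mem_filter.mp hR).2
  set y := join x R i j with hy
  have hyfeas : feasible y := join_feasible hx R i j
  refine ⟨y, hyfeas, join_ij x R hij, ?_⟩
  -- notation for products
  set Px : Finset V → ℝ := fun t => ∏ e ∈ t.powersetCard 2, x e with hPx
  set Py : Finset V → ℝ := fun t => ∏ e ∈ t.powersetCard 2, y e with hPy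
  have hsubpair : ∀ {t e : Finset V}, e ∈ t.powersetCard 2 → e ∈ pairs V := by
    intro t e he
    exact mem_pairs_iff.mpr (Finset.mem_powersetCard.mp he).2
  have hPx01 : ∀ t : Finset V, Px t = 0 ∨ Px t = 1 := fun t =>
    prod01 _ _ (fun e he => hx.1 e (hsubpair he))
  have hPy01 : ∀ t : Finset V, Py t = 0 ∨ Py t = 1 := fun t =>
    prod01 _ _ (fun e _ => join_01 x R i j e)
  have hTsub : Tof (cut R) ⊆ triples V := Finset.filter_subset _ _
  have hTijsub : Tof {({i, j} : Finset V)} ⊆ Tof (cut R) := by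
    intro t ht
    rw [Tof, Finset.mem_filter] at ht ⊢
    obtain ⟨ht1, e, he, he2⟩ := ht
    rw [Finset.mem_singleton] at he2
    exact ⟨ht1, e, he, by rwa [he2]⟩
  -- triples outside Tof (cut R) are unchanged
  have hTfix : ∀ t ∈ triples V, t ∉ Tof (cut R) → Py t = Px t := by
    intro t ht hnt
    apply Finset.prod_congr rfl
    intro e he
    have henc : e ∉ cut R := by
      intro hec
      exact hnt (Finset.mem_filter.mpr ⟨ht, e, he, hec⟩)
    have hecard : e.card = 2 := (Finset.mem_powersetCard.mp he).2
    have : (e ∩ R).card ≠ 1 := by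
      intro hc
      exact henc (Finset.mem_filter.mpr ⟨mem_pairs_iff.mpr hecard, hc⟩)
    show y e = x e
    rw [hy]
    exact join_eq_of_not_cut hx hside hecard this
  -- triples containing {i,j} have Px = 0
  have hPx0 : ∀ t ∈ Tof {({i, j} : Finset V)}, Px t = 0 := by
    intro t ht
    obtain ⟨_, e, he, he2⟩ := Finset.mem_filter.mp ht
    rw [Finset.mem_singleton] at he2
    subst he2
    exact Finset.prod_eq_zero he h0
  -- main estimate on the triple sum
  have hT1 : ∑ t ∈ triples V, c t * (Py t - Px t)
      = ∑ t ∈ Tof (cut R), c t * (Py t - Px t) := by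
    symm
    apply Finset.sum_subset hTsub
    intro t ht hnt
    rw [hTfix t ht hnt]
    ring
  have habs : ∀ t : Finset V, c t * (Py t - Px t) ≤ |c t| := by
    intro t
    rcases hPy01 t with h1 | h1 <;> rcases hPx01 t with h2 | h2 <;> rw [h1, h2] <;>
      nlinarith [le_abs_self (c t), neg_abs_le (c t)]
  have hsplit : ∑ t ∈ Tof {({i, j} : Finset V)}, max (-(c t)) 0
      ≤ ∑ t ∈ Tof (cut R), (|c t| - c t * (Py t - Px t)) := by
    calc ∑ t ∈ Tof {({i, j} : Finset V)}, max (-(c t)) 0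
        ≤ ∑ t ∈ Tof {({i, j} : Finset V)}, (|c t| - c t * (Py t - Px t)) := by
          apply Finset.sum_le_sum
          intro t ht
          rw [hPx0 t ht]
          rcases hPy01 t with h1 | h1 <;> rw [h1]
          · simpa using max_neg_le_abs (c t)
          · have := abs_sub_self_eq (c t)
            nlinarith [le_max_right (-(c t)) 0]
      _ ≤ ∑ t ∈ Tof (cut R), (|c t| - c t * (Py t - Px t)) := by
          apply Finset.sum_le_sum_of_subset_of_nonneg hTijsub
          intro t ht _
          have := habs t
          linarith
  have hT2 : ∑ t ∈ Tof (cut R), c t * (Py t - Px t)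
      ≤ ∑ t ∈ Tof (cut R), |c t| - ∑ t ∈ Tof {({i, j} : Finset V)}, max (-(c t)) 0 := by
    rw [Finset.sum_sub_distrib] at hsplit
    linarith
  -- pair sums
  have hEsub : cut R ⊆ pairs V := Finset.filter_subset _ _
  have hE1 : ∑ e ∈ pairs V, c e * (y e - x e) = ∑ e ∈ cut R, c e * (y e - x e) := by
    symm
    apply Finset.sum_subset hEsub
    intro e he hne
    have hecard : e.card = 2 := mem_pairs_iff.mp he
    have : (e ∩ R).card ≠ 1 := by
      intro hc
      exact hne (Finset.mem_filter.mpr ⟨he, hc⟩)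
    rw [hy, join_eq_of_not_cut hx hside hecard this]
    ring
  have hij1 : y {i, j} = 1 := join_ij x R hij
  have hterm : (2 : ℝ) * max (-(c {i, j})) 0
      = |c {i, j}| - c {i, j} * (y {i, j} - x {i, j}) := by
    rw [hij1, h0]
    have := abs_sub_self_eq (c {i, j})
    linarith
  have hsingle : 2 * max (-(c {i, j})) 0 ≤ ∑ e ∈ cut R, (|c e| - c e * (y e - x e)) := by
    rw [hterm]
    apply Finset.single_le_sum (f := fun e => |c e| - c e * (y e - x e)) ?_ hR
    intro e he
    have he2 : e ∈ pairs V := hEsub he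
    rcases hx.1 e he2 with h1 | h1 <;> rcases hyfeas.1 e he2 with h2 | h2 <;>
      rw [h1, h2] <;> nlinarith [le_abs_self (c e), neg_abs_le (c e)]
  have hE2 : ∑ e ∈ cut R, c e * (y e - x e)
      ≤ ∑ e ∈ cut R, |c e| - 2 * max (-(c {i, j})) 0 := by
    rw [Finset.sum_sub_distrib] at hsingle
    linarith
  -- combine
  have key : obj c y - obj c x = ∑ t ∈ triples V, c t * (Py t - Px t)
      + ∑ e ∈ pairs V, c e * (y e - x e) := by
    simp only [obj, hPx, hPy, mul_sub, Finset.sum_sub_distrib]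
    ring
  rw [hT1, hE1] at key
  linarith

lemma obj_congr {V : Type*} [Fintype V] [DecidableEq V] (c : Finset V → ℝ)
    {x x' : Finset V → ℝ} (h : ∀ e ∈ pairs V, x e = x' e) : obj c x = obj c x' := by
  unfold obj
  congr 2
  · apply Finset.sum_congr rfl
    intro t _
    congr 1
    apply Finset.prod_congr rfl
    intro e he
    exact h e (mem_pairs_iff.mpr (Finset.mem_powersetCard.mp he).2)
  · apply Finset.sum_congr rfl
    intro e he
    rw [h e he]

end Aux

/--
Let `S` be a finite nonempty set, `c` a cost function, and
`{i,j} ∈ binom(S,2)`.  If there exists `R ⊆ S` with `{i,j} ∈ δ(R)` such that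
`2 c_{ij}⁻ + Σ_{{p,q,r} ∈ T_{{{i,j}}}} c_{pqr}⁻
  ≥ Σ_{{p,q,r} ∈ T_{δ(R)}} |c_{pqr}| + Σ_{{p,q} ∈ δ(R)} |c_{pq}|`,
then there exists an optimal solution `x*` of `min_{x ∈ X_S} φ_c(x)` with `x*_{ij} = 1`.
-/
theorem edge_join_persistency {V : Type*} [Fintype V] [DecidableEq V] [Nonempty V]
    (c : Finset V → ℝ) (i j : V) (hij : i ≠ j) (R : Finset V)
    (hR : ({i, j} : Finset V) ∈ cut R)
    (h : 2 * max (-(c {i, j})) 0 + ∑ t ∈ Tof {({i, j} : Finset V)}, max (-(c t)) 0 ≥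
        ∑ t ∈ Tof (cut R), |c t| + ∑ e ∈ cut R, |c e|) :
    ∃ xstar : Finset V → ℝ, feasible xstar ∧
      (∀ x : Finset V → ℝ, feasible x → obj c xstar ≤ obj c x) ∧
      xstar {i, j} = 1 := by
  classical
  -- canonical representative of a feasible solution
  set χ : Finset (Finset V) → Finset V → ℝ := fun A e => if e ∈ A then 1 else 0 with hχ
  have hcanon : ∀ x : Finset V → ℝ, feasible x →
      ∀ e ∈ pairs V, χ ((pairs V).filter (fun e => x e = 1)) e = x e := by
    intro x hx e he
    by_cases hxe : x e = 1
    · rw [hχ]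
      simp only [Finset.mem_filter]
      rw [if_pos ⟨he, hxe⟩, hxe]
    · have hx0 : x e = 0 := (hx.1 e he).resolve_right hxe
      rw [hχ]
      simp only [Finset.mem_filter]
      rw [if_neg (fun hc => hxe hc.2), hx0]
  have hcanon_feas : ∀ x : Finset V → ℝ, feasible x →
      feasible (χ ((pairs V).filter (fun e => x e = 1))) := by
    intro x hx
    constructor
    · intro e _
      rw [hχ]
      dsimp only
      split <;> simp
    · intro p q r hpq hqr hpr
      rw [hcanon x hx _ (pair_mem_pairs hpq), hcanon x hx _ (pair_mem_pairs hqr),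
        hcanon x hx _ (pair_mem_pairs hpr)]
      exact hx.2 p q r hpq hqr hpr
  set F : Finset (Finset (Finset V)) :=
    ((pairs V).powerset).filter (fun A => feasible (χ A) ∧ χ A {i, j} = 1) with hF
  have hFmem : ∀ x : Finset V → ℝ, feasible x → x {i, j} = 1 →
      ((pairs V).filter (fun e => x e = 1)) ∈ F := by
    intro x hx hx1
    rw [hF, Finset.mem_filter]
    refine ⟨Finset.mem_powerset.mpr (Finset.filter_subset _ _), hcanon_feas x hx, ?_⟩
    rw [hcanon x hx _ (pair_mem_pairs hij), hx1]
  have hx0feas : feasible (fun _ : Finset V => (0 : ℝ)) :=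
    ⟨fun e _ => Or.inl rfl, fun p q r _ _ _ => by norm_num⟩
  obtain ⟨y0, hy0f, hy01, _⟩ := improve c i j hij R hR h _ hx0feas
  have hFne : F.Nonempty := ⟨_, hFmem y0 hy0f hy01⟩
  obtain ⟨A, hAF, hAmin⟩ := F.exists_min_image (fun A => obj c (χ A)) hFne
  rw [hF, Finset.mem_filter] at hAF
  refine ⟨χ A, hAF.2.1, ?_, hAF.2.2⟩
  intro x hxf
  obtain ⟨y, hyf, hy1, hyle⟩ := improve c i j hij R hR h x hxf
  have hAy := hFmem y hyf hy1
  calc obj c (χ A) ≤ obj c (χ ((pairs V).filter (fun e => y e = 1))) := hAmin _ hAy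
    _ = obj c y := obj_congr c (hcanon y hyf)
    _ ≤ obj c x := hyle
end

section
/- Let S be a finite nonempty set and c a cost function. Define c' on binom(S,3) ∪ binom(S,2) ∪ {∅} by c'_∅ = (1/2)·Σ_{{p,q,r}∈binom(S,3)} c_{pqr} + Σ_{{p,q}∈binom(S,2)} c_{pq}, c'_{pq} = −c_{pq} + (1/2)·Σ_{r∈S∖{p,q}} c_{pqr} for every {p,q} ∈ binom(S,2), and c'_{pqr} = −2·c_{pqr} for every {p,q,r} ∈ binom(S,3). Then for every partition 𝓡 of S, with x^𝓡 ∈ X_S the feasible vector of 𝓡 (x^𝓡_{pq} = 1 iff p,q lie in the same block), it holds that φ_{c'}(x^𝓡) = (1/2)·Σ_{{R,R',R''}∈binom(𝓡,3)} Σ_{{p,q,r}∈T_{RR'R''}} c_{pqr} + Σ_{{R,R'}∈binom(𝓡,2)} Σ_{{p,q}∈δ(R,R')} c_{pq} + Σ_{{R,R'}∈binom(𝓡,2)} ( Σ_{{p,q,r}∈T_{RRR'}} c_{pqr} + Σ_{{p,q,r}∈T_{RR'R'}} c_{pqr} ). -/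
open Finset

/-- The feasible vector `x^𝓡` of a partition `𝓡`: `x_{pq} = 1` iff `p` and `q` lie in the
same block of `𝓡`. -/
def partVec {V : Type*} [Fintype V] [DecidableEq V]
    (P : Finpartition (univ : Finset V)) : Finset V → ℝ :=
  fun e => if ∃ B ∈ P.parts, e ⊆ B then 1 else 0

/-- `T_{ABC}`: the triples `{p,q,r}` with `p ∈ A`, `q ∈ B`, `r ∈ C`. -/
def T3 {V : Type*} [Fintype V] [DecidableEq V] (A B C : Finset V) : Finset (Finset V) :=
  (triples V).filter fun t => ∃ p ∈ A, ∃ q ∈ B, ∃ r ∈ C, t = ({p, q, r} : Finset V)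

/-- `δ(A,B)`: the pairs `{p,q}` with `p ∈ A` and `q ∈ B`. -/
def delta2 {V : Type*} [Fintype V] [DecidableEq V] (A B : Finset V) : Finset (Finset V) :=
  (pairs V).filter fun e => ∃ p ∈ A, ∃ q ∈ B, e = ({p, q} : Finset V)

/-- For an unordered set `s = {A,B,C}` of three blocks, the set `T_{ABC}`
(well defined since `T_{ABC}` is symmetric in `A`, `B`, `C`). -/
def T3set {V : Type*} [Fintype V] [DecidableEq V] (s : Finset (Finset V)) :
    Finset (Finset V) :=
  (triples V).filter fun t =>
    ∃ A ∈ s, ∃ B ∈ s, ∃ C ∈ s, ({A, B, C} : Finset (Finset V)) = s ∧ t ∈ T3 A B C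

/-- For an unordered set `s = {A,B}` of two blocks, the set `δ(A,B)`
(well defined since `δ(A,B)` is symmetric in `A`, `B`). -/
def delta2set {V : Type*} [Fintype V] [DecidableEq V] (s : Finset (Finset V)) :
    Finset (Finset V) :=
  (pairs V).filter fun e =>
    ∃ A ∈ s, ∃ B ∈ s, ({A, B} : Finset (Finset V)) = s ∧ e ∈ delta2 A B

/-!
Both sides are linear in `c`, so it suffices to compare the coefficient of every `c_t` and
every `c_e`. On the left, the triple sum hidden in `c'_{pq}` is moved onto the triples (each
triple arises once from each of its three pairs): `c_t` gets
`-2·[t inside one block] + ½·#(pairs of t inside a block) + ½` and `c_e` gets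
`1 - [e inside one block]`. On the right, the three families `T_{RR'R''}`, `δ(R,R')` and
`T_{AAB}` are disjoint unions, indexed by blocks, of the triples meeting three blocks, the pairs
meeting two blocks, and the triples meeting two blocks (`A` being the block holding two of the
points). The coefficients then agree on each of the three block patterns of a triple.
-/

theorem Finset.sum_powersetCard_sum_sdiff_insert {α M : Type*} [DecidableEq α]
    [AddCommMonoid M] (s : Finset α) (k : ℕ) (F : Finset α → Finset α → M) :
    ∑ e ∈ s.powersetCard k, ∑ r ∈ s \ e, F e (insert r e)
      = ∑ t ∈ s.powersetCard (k + 1), ∑ e ∈ t.powersetCard k, F e t := by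
  rw [sum_sigma', sum_sigma']
  refine sum_nbij (fun x => ⟨insert x.2 x.1, x.1⟩) ?_ ?_ ?_ fun _ _ => rfl
  · rintro ⟨e, r⟩ h
    simp only [mem_sigma, mem_powersetCard, mem_sdiff] at h ⊢
    obtain ⟨⟨hes, hek⟩, hrs, hre⟩ := h
    exact ⟨⟨insert_subset hrs hes, by rw [card_insert_of_notMem hre, hek]⟩,
      subset_insert _ _, hek⟩
  · rintro ⟨e, r⟩ h ⟨e', r'⟩ h' heq
    simp only [mem_coe, mem_sigma, mem_sdiff] at h h'
    obtain ⟨hr, rfl⟩ := Sigma.mk.inj_iff.1 heq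
    have : r ∈ insert r' e := hr ▸ mem_insert_self r e
    rw [mem_insert, or_iff_left h.2.2] at this
    rw [this]
  · rintro ⟨t, e⟩ h
    simp only [mem_coe, mem_sigma, mem_powersetCard] at h
    obtain ⟨⟨hts, htk⟩, het, hek⟩ := h
    obtain ⟨r, hr⟩ : (t \ e).Nonempty := by
      rw [← card_pos, card_sdiff_of_subset het, htk, hek]; omega
    rw [mem_sdiff] at hr
    refine ⟨⟨e, r⟩, ?_, ?_⟩
    · simp only [mem_coe, mem_sigma, mem_powersetCard, mem_sdiff]
      exact ⟨⟨het.trans hts, hek⟩, hts hr.1, hr.2⟩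
    · have : insert r e = t := eq_of_subset_of_card_le (insert_subset hr.1 het)
        (by rw [card_insert_of_notMem hr.2, hek, htk])
      simp [this]

theorem Finset.powersetCard_two_eq_of_card_eq_three {α : Type*} [DecidableEq α] {p q r : α}
    (hpq : p ≠ q) (hpr : p ≠ r) (hqr : q ≠ r) :
    ({p, q, r} : Finset α).powersetCard 2 = {{p, q}, {p, r}, {q, r}} := by
  have hqr2 : ({q, r} : Finset α).powersetCard 2 = {{q, r}} := by
    rw [← card_pair hqr, powersetCard_self]
  rw [powersetCard_succ_insert (by simp [hpq, hpr]), powersetCard_one, hqr2]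
  ext e
  simp only [mem_union, mem_singleton, mem_image, mem_map, mem_insert]
  aesop

lemma obj_eq_of_cost_transform {V : Type*} [Fintype V] [DecidableEq V] {c c' : Finset V → ℝ}
    (hc'0 : c' ∅ = (1 / 2) * ∑ t ∈ triples V, c t + ∑ e ∈ pairs V, c e)
    (hc'2 : ∀ e ∈ pairs V, c' e = -c e + (1 / 2) * ∑ r ∈ univ \ e, c (insert r e))
    (hc'3 : ∀ t ∈ triples V, c' t = -2 * c t) (x : Finset V → ℝ) :
    obj c' x = ∑ t ∈ triples V, c t *
        (-2 * ∏ e ∈ t.powersetCard 2, x e + 1 / 2 * ∑ e ∈ t.powersetCard 2, x e + 1 / 2)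
      + ∑ e ∈ pairs V, c e * (1 - x e) := by
  have htriples : ∑ t ∈ triples V, c' t * ∏ e ∈ t.powersetCard 2, x e
      = ∑ t ∈ triples V, -2 * c t * ∏ e ∈ t.powersetCard 2, x e :=
    sum_congr rfl fun t ht => by rw [hc'3 t ht]
  have hpairs : ∑ e ∈ pairs V, c' e * x e = ∑ e ∈ pairs V, -c e * x e
      + 1 / 2 * ∑ t ∈ triples V, c t * ∑ e ∈ t.powersetCard 2, x e := by
    rw [sum_congr rfl fun t _ => mul_sum (t.powersetCard 2) x (c t), triples,
      ← sum_powersetCard_sum_sdiff_insert, mul_sum, pairs, ← sum_add_distrib]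
    refine sum_congr rfl fun e he => ?_
    rw [hc'2 e he, ← sum_mul]
    ring
  rw [obj, htriples, hpairs, hc'0, mul_sum, mul_sum,
    show ∀ a b d f g : ℝ, a + (b + d) + (f + g) = (a + d + f) + (b + g) by intros; ring,
    ← sum_add_distrib, ← sum_add_distrib, ← sum_add_distrib]
  congr 1 <;> exact sum_congr rfl fun _ _ => by ring

namespace Finpartition

variable {V : Type*} [Fintype V] [DecidableEq V] (P : Finpartition (univ : Finset V))

lemma image_part_subset_parts (t : Finset V) : t.image P.part ⊆ P.parts := by
  simp only [subset_iff, mem_image]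
  rintro _ ⟨v, -, rfl⟩
  exact P.part_mem.2 (mem_univ v)

lemma exists_subset_iff_card_image_part_eq_one {e : Finset V} (he : e.Nonempty) :
    (∃ B ∈ P.parts, e ⊆ B) ↔ #(e.image P.part) = 1 := by
  constructor
  · rintro ⟨B, hB, heB⟩
    refine le_antisymm (card_le_one_iff_subset_singleton.2 ⟨B, ?_⟩) (he.image _).card_pos
    simp only [subset_iff, mem_image, mem_singleton]
    rintro _ ⟨v, hv, rfl⟩
    exact P.part_eq_of_mem hB (heB hv)
  · rw [card_eq_one]
    rintro ⟨B, hB⟩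
    obtain ⟨v, hv⟩ := he
    have hpart : ∀ w ∈ e, P.part w = B := fun w hw =>
      mem_singleton.1 (hB ▸ mem_image_of_mem P.part hw)
    refine ⟨B, hpart v hv ▸ P.part_mem.2 (mem_univ v), fun w hw => ?_⟩
    rw [← hpart w hw]
    exact P.mem_part (mem_univ w)

lemma partVec_eq_ite {e : Finset V} (he : e.Nonempty) :
    partVec P e = if #(e.image P.part) = 1 then 1 else 0 := by
  simp only [partVec, P.exists_subset_iff_card_image_part_eq_one he]

lemma one_sub_partVec {e : Finset V} (he : e ∈ pairs V) :
    1 - partVec P e = if #(e.image P.part) = 2 then 1 else 0 := by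
  have he2 : #e = 2 := (mem_powersetCard.1 he).2
  have hne : e.Nonempty := card_pos.1 (by omega)
  have hle : #(e.image P.part) ≤ 2 := he2 ▸ card_image_le
  have hpos : 0 < #(e.image P.part) := (hne.image _).card_pos
  rw [P.partVec_eq_ite hne]
  split_ifs <;> first | omega | norm_num

lemma partVec_triple_coeff {t : Finset V} (ht : t ∈ triples V) :
    -2 * ∏ e ∈ t.powersetCard 2, partVec P e + 1 / 2 * ∑ e ∈ t.powersetCard 2, partVec P e
        + 1 / 2
      = 1 / 2 * (if #(t.image P.part) = 3 then 1 else 0)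
        + if #(t.image P.part) = 2 then 1 else 0 := by
  obtain ⟨p, q, r, hpq, hpr, hqr, rfl⟩ := card_eq_three.1 (mem_powersetCard.1 ht).2
  have hpairs : ({p, q} : Finset V) ∉ ({{p, r}, {q, r}} : Finset (Finset V)) ∧
      ({p, r} : Finset V) ≠ {q, r} := by
    simp only [mem_insert, mem_singleton, not_or, ne_eq, Finset.ext_iff]
    refine ⟨⟨fun h => ?_, fun h => ?_⟩, fun h => ?_⟩
    · simpa [hqr, Ne.symm hpq] using h q
    · simpa [hpq, hpr] using h p
    · simpa [hpq, hpr] using h p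
  rw [powersetCard_two_eq_of_card_eq_three hpq hpr hqr, prod_insert hpairs.1,
    sum_insert hpairs.1, prod_pair hpairs.2, sum_pair hpairs.2]
  simp only [P.partVec_eq_ite (insert_nonempty _ _), image_insert, image_singleton]
  by_cases hab : P.part p = P.part q <;> by_cases hac : P.part p = P.part r <;>
    by_cases hbc : P.part q = P.part r <;> simp_all <;> norm_num

lemma T3set_eq_filter {s : Finset (Finset V)} (hs : s ⊆ P.parts) :
    T3set s = (triples V).filter (·.image P.part = s) := by
  refine filter_congr fun t ht => ⟨?_, ?_⟩
  · rintro ⟨A, hA, B, hB, C, hC, rfl, hABC⟩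
    obtain ⟨-, p, hp, q, hq, r, hr, rfl⟩ := mem_filter.1 hABC
    simp [P.part_eq_of_mem (hs hA) hp, P.part_eq_of_mem (hs hB) hq,
      P.part_eq_of_mem (hs hC) hr]
  · rintro rfl
    obtain ⟨p, q, r, -, -, -, rfl⟩ := card_eq_three.1 (mem_powersetCard.1 ht).2
    exact ⟨P.part p, by simp, P.part q, by simp, P.part r, by simp, by simp,
      mem_filter.2 ⟨ht, p, P.mem_part (mem_univ p), q, P.mem_part (mem_univ q),
        r, P.mem_part (mem_univ r), rfl⟩⟩

lemma delta2set_eq_filter {s : Finset (Finset V)} (hs : s ⊆ P.parts) :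
    delta2set s = (pairs V).filter (·.image P.part = s) := by
  refine filter_congr fun e he => ⟨?_, ?_⟩
  · rintro ⟨A, hA, B, hB, rfl, hAB⟩
    obtain ⟨-, p, hp, q, hq, rfl⟩ := mem_filter.1 hAB
    simp [P.part_eq_of_mem (hs hA) hp, P.part_eq_of_mem (hs hB) hq]
  · rintro rfl
    obtain ⟨p, q, -, rfl⟩ := card_eq_two.1 (mem_powersetCard.1 he).2
    exact ⟨P.part p, by simp, P.part q, by simp, by simp,
      mem_filter.2 ⟨he, p, P.mem_part (mem_univ p), q, P.mem_part (mem_univ q), rfl⟩⟩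

lemma sum_powersetCard_sum_filter_image_part {M : Type*} [AddCommMonoid M] (k : ℕ)
    (X : Finset (Finset V)) (f : Finset V → M) :
    ∑ s ∈ P.parts.powersetCard k, ∑ t ∈ X with t.image P.part = s, f t
      = ∑ t ∈ X with #(t.image P.part) = k, f t := by
  rw [sum_fiberwise_eq_sum_filter]
  refine sum_congr (filter_congr fun t _ => ?_) fun _ _ => rfl
  simp [mem_powersetCard, P.image_part_subset_parts t]

lemma sum_T3set_eq_sum_filter {M : Type*} [AddCommMonoid M] (f : Finset V → M) :
    ∑ s ∈ P.parts.powersetCard 3, ∑ t ∈ T3set s, f t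
      = ∑ t ∈ triples V with #(t.image P.part) = 3, f t := by
  rw [← P.sum_powersetCard_sum_filter_image_part]
  exact sum_congr rfl fun s hs => by rw [P.T3set_eq_filter (mem_powersetCard.1 hs).1]

lemma sum_delta2set_eq_sum_filter {M : Type*} [AddCommMonoid M] (f : Finset V → M) :
    ∑ s ∈ P.parts.powersetCard 2, ∑ e ∈ delta2set s, f e
      = ∑ e ∈ pairs V with #(e.image P.part) = 2, f e := by
  rw [← P.sum_powersetCard_sum_filter_image_part]
  exact sum_congr rfl fun s hs => by rw [P.delta2set_eq_filter (mem_powersetCard.1 hs).1]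

lemma inter_nonempty_of_mem_image_part {t A : Finset V} (hA : A ∈ t.image P.part) :
    (t ∩ A).Nonempty := by
  obtain ⟨v, hv, rfl⟩ := mem_image.1 hA
  exact ⟨v, mem_inter.2 ⟨hv, P.mem_part (mem_univ v)⟩⟩

lemma inter_union_inter_of_image_part_eq {t A B : Finset V}
    (ht : t.image P.part = {A, B}) : t ∩ A ∪ t ∩ B = t := by
  refine union_subset inter_subset_left inter_subset_left |>.antisymm fun v hv => ?_
  have : P.part v ∈ ({A, B} : Finset _) := ht ▸ mem_image_of_mem P.part hv
  rcases mem_insert.1 this with h | h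
  · exact mem_union_left _ (mem_inter.2 ⟨hv, h ▸ P.mem_part (mem_univ v)⟩)
  · exact mem_union_right _ (mem_inter.2 ⟨hv, mem_singleton.1 h ▸ P.mem_part (mem_univ v)⟩)

lemma card_inter_add_card_inter_of_image_part_eq {t A B : Finset V} (hAB : A ≠ B)
    (ht : t.image P.part = {A, B}) : #(t ∩ A) + #(t ∩ B) = #t := by
  have hparts : A ∈ P.parts ∧ B ∈ P.parts := by
    simpa [insert_subset_iff, ht] using P.image_part_subset_parts t
  conv_rhs => rw [← P.inter_union_inter_of_image_part_eq ht]
  exact (card_union_of_disjoint <|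
    (P.disjoint hparts.1 hparts.2 hAB).mono inter_subset_right inter_subset_right).symm

lemma mem_T3_iff {t A B : Finset V} (hA : A ∈ P.parts) (hB : B ∈ P.parts) (hAB : A ≠ B)
    (ht : t ∈ triples V) : t ∈ T3 A A B ↔ t.image P.part = {A, B} ∧ #(t ∩ A) = 2 := by
  have htcard : #t = 3 := (mem_powersetCard.1 ht).2
  constructor
  · intro h
    obtain ⟨-, x, hx, y, hy, z, hz, rfl⟩ := mem_filter.1 h
    have himg : ({x, y, z} : Finset V).image P.part = {A, B} := by
      simp [P.part_eq_of_mem hA hx, P.part_eq_of_mem hA hy, P.part_eq_of_mem hB hz]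
    refine ⟨himg, ?_⟩
    have hsum := P.card_inter_add_card_inter_of_image_part_eq hAB himg
    have hB1 : 0 < #(({x, y, z} : Finset V) ∩ B) := card_pos.2 ⟨z, by simp [hz]⟩
    have hA2 : #({x, y, z} : Finset V) ≤ #(({x, y, z} : Finset V) ∩ A) + 1 := by
      refine (card_le_card fun v hv => ?_).trans (card_insert_le z _)
      simp only [mem_insert, mem_singleton] at hv ⊢
      rcases hv with rfl | rfl | rfl <;> simp [hx, hy]
    omega
  · rintro ⟨himg, hA2⟩
    obtain ⟨x, y, -, hxy⟩ := card_eq_two.1 hA2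
    have hsum := P.card_inter_add_card_inter_of_image_part_eq hAB himg
    obtain ⟨z, hz⟩ : ∃ z, t ∩ B = {z} := card_eq_one.1 (by omega)
    have hx : x ∈ t ∩ A := by simp [hxy]
    have hy : y ∈ t ∩ A := by simp [hxy]
    have hz' : z ∈ t ∩ B := by simp [hz]
    refine mem_filter.2 ⟨ht, x, (mem_inter.1 hx).2, y, (mem_inter.1 hy).2, z,
      (mem_inter.1 hz').2, ?_⟩
    rw [← P.inter_union_inter_of_image_part_eq himg, hxy, hz]
    ext v
    simp

lemma pairwiseDisjoint_T3 :
    ((P.parts.sigma fun A => P.parts.erase A : Finset _) :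
      Set (Σ _ : Finset V, Finset V)).PairwiseDisjoint fun x => T3 x.1 x.1 x.2 := by
  rintro ⟨A, B⟩ hx ⟨A', B'⟩ hy hxy
  simp only [coe_sigma, Set.mem_sigma_iff, mem_coe, mem_erase] at hx hy
  refine disjoint_left.2 fun t ht ht' => ?_
  have ht3 : t ∈ triples V := (mem_filter.1 ht).1
  obtain ⟨himg, hA2⟩ := (P.mem_T3_iff hx.1 hx.2.2 (Ne.symm hx.2.1) ht3).1 ht
  obtain ⟨himg', hA2'⟩ := (P.mem_T3_iff hy.1 hy.2.2 (Ne.symm hy.2.1) ht3).1 ht'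
  rw [himg] at himg'
  have hA' : A' ∈ ({A, B} : Finset _) := by simp [himg']
  have hB' : B' ∈ ({A, B} : Finset _) := by simp [himg']
  simp only [mem_insert, mem_singleton] at hA' hB'
  rcases hA' with rfl | rfl
  · rcases hB' with rfl | rfl
    · exact hy.2.1 rfl
    · exact hxy rfl
  · -- `t` would have two points in each of the blocks `A` and `A'`
    have := P.card_inter_add_card_inter_of_image_part_eq (Ne.symm hx.2.1) himg
    rw [(mem_powersetCard.1 ht3).2] at this
    omega

lemma biUnion_T3 :
    (P.parts.sigma fun A => P.parts.erase A).biUnion (fun x => T3 x.1 x.1 x.2)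
      = {t ∈ triples V | #(t.image P.part) = 2} := by
  ext t
  simp only [mem_biUnion, mem_sigma, mem_erase, mem_filter, Sigma.exists]
  constructor
  · rintro ⟨A, B, ⟨hA, hBA, hB⟩, ht⟩
    refine ⟨(mem_filter.1 ht).1, ?_⟩
    rw [((P.mem_T3_iff hA hB (Ne.symm hBA) (mem_filter.1 ht).1).1 ht).1, card_pair hBA.symm]
  · rintro ⟨ht, himg⟩
    obtain ⟨A, B, hAB, himg⟩ := card_eq_two.1 himg
    have hparts : A ∈ P.parts ∧ B ∈ P.parts := by
      simpa [insert_subset_iff, himg] using P.image_part_subset_parts t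
    have hsum := P.card_inter_add_card_inter_of_image_part_eq hAB himg
    have hA := (P.inter_nonempty_of_mem_image_part (t := t) (A := A) (by simp [himg])).card_pos
    have hB := (P.inter_nonempty_of_mem_image_part (t := t) (A := B) (by simp [himg])).card_pos
    rw [(mem_powersetCard.1 ht).2] at hsum
    obtain hA2 | hB2 : #(t ∩ A) = 2 ∨ #(t ∩ B) = 2 := by omega
    · exact ⟨A, B, ⟨hparts.1, hAB.symm, hparts.2⟩,
        (P.mem_T3_iff hparts.1 hparts.2 hAB ht).2 ⟨himg, hA2⟩⟩
    · exact ⟨B, A, ⟨hparts.2, hAB, hparts.1⟩,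
        (P.mem_T3_iff hparts.2 hparts.1 hAB.symm ht).2 ⟨by rw [himg, pair_comm], hB2⟩⟩

lemma sum_sum_T3_eq_sum_filter {M : Type*} [AddCommMonoid M] (f : Finset V → M) :
    ∑ A ∈ P.parts, ∑ B ∈ P.parts.erase A, ∑ t ∈ T3 A A B, f t
      = ∑ t ∈ triples V with #(t.image P.part) = 2, f t := by
  rw [sum_sigma', ← sum_biUnion P.pairwiseDisjoint_T3, biUnion_T3]

end Finpartition

-- The last sum over unordered pairs `{R, R'}` of blocks is written as the sum of `T_{AAB}`
-- over ordered pairs `(A, B)` of distinct blocks.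
theorem partition_subgraph_identity_general {V : Type*} [Fintype V] [DecidableEq V]
    (c c' : Finset V → ℝ)
    (hc'0 : c' ∅ = (1 / 2) * ∑ t ∈ triples V, c t + ∑ e ∈ pairs V, c e)
    (hc'2 : ∀ e ∈ pairs V, c' e = -c e + (1 / 2) * ∑ r ∈ univ \ e, c (insert r e))
    (hc'3 : ∀ t ∈ triples V, c' t = -2 * c t)
    (P : Finpartition (univ : Finset V)) :
    obj c' (partVec P) =
      (1 / 2) * ∑ s ∈ P.parts.powersetCard 3, ∑ t ∈ T3set s, c t
        + ∑ s ∈ P.parts.powersetCard 2, ∑ e ∈ delta2set s, c e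
        + ∑ A ∈ P.parts, ∑ B ∈ P.parts.erase A, ∑ t ∈ T3 A A B, c t := by
  rw [obj_eq_of_cost_transform hc'0 hc'2 hc'3, P.sum_T3set_eq_sum_filter,
    P.sum_delta2set_eq_sum_filter, P.sum_sum_T3_eq_sum_filter, add_right_comm,
    sum_filter, sum_filter, sum_filter, mul_sum, ← sum_add_distrib]
  congr 1 <;> refine sum_congr rfl fun s hs => ?_
  · rw [P.partVec_triple_coeff hs]
    split_ifs <;> ring
  · rw [P.one_sub_partVec hs]
    split_ifs <;> ring

/--
Let `S` be a finite nonempty set and `c` a cost function.  Define `c'` by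
`c'_∅ = ½ Σ_{binom(S,3)} c_{pqr} + Σ_{binom(S,2)} c_{pq}`,
`c'_{pq} = −c_{pq} + ½ Σ_{r ∈ S∖{p,q}} c_{pqr}`, and `c'_{pqr} = −2 c_{pqr}`.
Then for every partition `𝓡` of `S`, with `x^𝓡` its feasible vector,
`φ_{c'}(x^𝓡) = ½ Σ_{{R,R',R''} ∈ binom(𝓡,3)} Σ_{T_{RR'R''}} c_{pqr}
  + Σ_{{R,R'} ∈ binom(𝓡,2)} Σ_{δ(R,R')} c_{pq}
  + Σ_{{R,R'} ∈ binom(𝓡,2)} ( Σ_{T_{RRR'}} c_{pqr} + Σ_{T_{RR'R'}} c_{pqr} )`.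
(The last sum over unordered pairs of blocks, being symmetric, is written as the sum over
ordered pairs of distinct blocks of `Σ_{T_{AAB}} c_{pqr}`.)
-/
theorem partition_subgraph_identity {V : Type*} [Fintype V] [DecidableEq V] [Nonempty V]
    (c c' : Finset V → ℝ)
    (hc'0 : c' ∅ = (1 / 2) * ∑ t ∈ triples V, c t + ∑ e ∈ pairs V, c e)
    (hc'2 : ∀ e ∈ pairs V, c' e = -c e + (1 / 2) * ∑ r ∈ univ \ e, c (insert r e))
    (hc'3 : ∀ t ∈ triples V, c' t = -2 * c t)
    (P : Finpartition (univ : Finset V)) :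
    obj c' (partVec P) =
      (1 / 2) * ∑ s ∈ P.parts.powersetCard 3, ∑ t ∈ T3set s, c t
        + ∑ s ∈ P.parts.powersetCard 2, ∑ e ∈ delta2set s, c e
        + ∑ A ∈ P.parts, ∑ B ∈ P.parts.erase A, ∑ t ∈ T3 A A B, c t :=
  partition_subgraph_identity_general c c' hc'0 hc'2 hc'3 P
end
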